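/- Harmonicity of the Chern–Ricci function: let U ⊆ ℂ be open, let (f, g) be Weierstrass data on U with moreover g(z) ≠ 0 for every z ∈ U, and set N_V(z) = (|g(z)|² − 1)/(1 + |g(z)|²) (the angle function for V = (0, 0, 1)). Then the Chern–Ricci function z ↦ ln((1 + N_V(z))² / (−K(z))^{1/2}) is harmonic on U: Δ(ln((1 + N_V)² / (−K)^{1/2})) = 0 on U. -/

import Mathlib

/-! On all of `ℂ`, `(1 + N_V)² / √(-K) = |g|⁴ |f| / |g'|`, so the Chern–Ricci function is
`log ‖g⁴ f / g'‖`, the logarithm of the modulus of a zero-free holomorphic function, hence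
harmonic. -/

/-- The flat Laplacian `Δ = ∂²/∂x² + ∂²/∂y²` on `ℂ ≃ ℝ²`, where the `x`-direction
is `1 : ℂ` and the `y`-direction is `I : ℂ`. -/
noncomputable def flatLaplacian (F : ℂ → ℝ) (z : ℂ) : ℝ :=
  fderiv ℝ (fun w => fderiv ℝ F w 1) z 1 +
    fderiv ℝ (fun w => fderiv ℝ F w Complex.I) z Complex.I

open InnerProductSpace Laplacian

theorem flatLaplacian_eq_laplacian {F : ℂ → ℝ} {z : ℂ} (hF : ContDiffAt ℝ 2 F z) :
    flatLaplacian F z = Δ F z := by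
  have hF' : DifferentiableAt ℝ (fderiv ℝ F) z :=
    (hF.fderiv_right (m := 1) (by norm_num)).differentiableAt (by norm_num)
  simp [flatLaplacian, laplacian_eq_iteratedFDeriv_complexPlane, iteratedFDeriv_two_apply,
    fderiv_clm_apply hF' (differentiableAt_const _)]

theorem InnerProductSpace.HarmonicAt.flatLaplacian_eq_zero {F : ℂ → ℝ} {z : ℂ}
    (hF : HarmonicAt F z) : flatLaplacian F z = 0 := by
  rw [flatLaplacian_eq_laplacian hF.1, hF.2.eq_of_nhds, Pi.zero_apply]

theorem one_add_angle_sq_div_sqrt_neg_curvature {a b d : ℝ} (hb : 0 ≤ b) (hd : 0 ≤ d) :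
    (1 + (a ^ 2 - 1) / (1 + a ^ 2)) ^ 2 / √(-(-(4 * d / (b * (1 + a ^ 2) ^ 2)) ^ 2))
      = a ^ 4 * b / d := by
  rw [neg_neg, Real.sqrt_sq (by positivity)]
  have : 1 + a ^ 2 ≠ 0 := by positivity
  field_simp
  ring

/-- Harmonicity of the Chern–Ricci function: for Weierstrass data
`(f, g)` on an open set `U ⊆ ℂ` with moreover `g ≠ 0` on `U`, with
`K = −(4|g'| / (|f|(1 + |g|²)²))²` and `N_V = (|g|² − 1)/(1 + |g|²)` (the angle
function for `V = (0,0,1)`), the Chern–Ricci function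
`z ↦ ln((1 + N_V(z))² / (−K(z))^{1/2})` is harmonic on `U`:
`Δ(ln((1 + N_V)² / (−K)^{1/2})) = 0` on `U`. -/
theorem chern_ricci_function_harmonic
    (U : Set ℂ) (hU : IsOpen U)
    (f g : ℂ → ℂ)
    (hf : DifferentiableOn ℂ f U) (hg : DifferentiableOn ℂ g U)
    (hf0 : ∀ z ∈ U, f z ≠ 0) (hg' : ∀ z ∈ U, deriv g z ≠ 0)
    (hg0 : ∀ z ∈ U, g z ≠ 0)
    (K Nv : ℂ → ℝ)
    (hK : ∀ z, K z = -(4 * ‖deriv g z‖ /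
      (‖f z‖ * (1 + ‖g z‖ ^ 2) ^ 2)) ^ 2)
    (hNv : ∀ z, Nv z = (‖g z‖ ^ 2 - 1) / (1 + ‖g z‖ ^ 2)) :
    ∀ z ∈ U,
      flatLaplacian (fun w => Real.log ((1 + Nv w) ^ 2 / Real.sqrt (-(K w)))) z = 0 := by
  intro z hz
  have hchern : (fun w => Real.log ((1 + Nv w) ^ 2 / Real.sqrt (-(K w))))
      = fun w => Real.log ‖g w ^ 4 * f w / deriv g w‖ := by
    funext w
    rw [hNv, hK, one_add_angle_sq_div_sqrt_neg_curvature (norm_nonneg _) (norm_nonneg _),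
      norm_div, norm_mul, norm_pow]
  have hgz : AnalyticAt ℂ g z := hg.analyticAt (hU.mem_nhds hz)
  have hfz : AnalyticAt ℂ f z := hf.analyticAt (hU.mem_nhds hz)
  have hh : AnalyticAt ℂ (fun w => g w ^ 4 * f w / deriv g w) z :=
    ((hgz.pow 4).mul hfz).div hgz.deriv (hg' z hz)
  rw [hchern]
  exact (hh.harmonicAt_log_norm (by simp [hg0 z hz, hf0 z hz, hg' z hz])).flatLaplacian_eq_zero
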